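/- For any loop ℓ (a non-backtracking walk of length at least 2 starting and ending at the same directed edge), one has λ(ℓ) = λ(ℓ⁻¹), and λ(ℓ) ∈ {x(ℓ), −x(ℓ)}. -/

import Mathlib

open scoped BigOperators

/-- The straight line segment drawn for an (unordered) edge, given the
positions of the vertices in the complex plane. -/
def segOf {α : Type*} (pos : α → ℂ) : Sym2 α → Set ℂ :=
  Sym2.lift ⟨fun u v => segment ℝ (pos u) (pos v), fun u v => segment_symm ℝ (pos u) (pos v)⟩

/-- A finite graph embedded in the complex plane: vertices are distinct points
of `ℂ`, edges are unordered pairs of distinct vertices drawn as straight line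
segments which pairwise intersect only at common endpoints, and no vertex lies
on an edge which does not contain it. -/
structure PlaneGraph where
  V : Type
  fintypeV : Fintype V
  decEqV : DecidableEq V
  pos : V → ℂ
  pos_inj : Function.Injective pos
  E : Finset (Sym2 V)
  not_diag : ∀ e ∈ E, ¬ e.IsDiag
  edges_meet : ∀ e₁ ∈ E, ∀ e₂ ∈ E, e₁ ≠ e₂ → ∀ p : ℂ,
    p ∈ segOf pos e₁ → p ∈ segOf pos e₂ → ∃ w : V, w ∈ e₁ ∧ w ∈ e₂ ∧ p = pos w
  vertex_on_edge : ∀ e ∈ E, ∀ w : V, pos w ∈ segOf pos e → w ∈ e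

attribute [instance] PlaneGraph.fintypeV PlaneGraph.decEqV

namespace PlaneGraph

variable (G : PlaneGraph)

/-- A directed edge: an ordered pair of vertices whose underlying
unordered pair is an edge of the graph. -/
abbrev DEdge : Type := {p : G.V × G.V // s(p.1, p.2) ∈ G.E}

/-- The reversal `-e` of a directed edge. -/
def rev (e : G.DEdge) : G.DEdge :=
  ⟨(e.val.2, e.val.1), by rw [Sym2.eq_swap]; exact e.property⟩

/-- The undirected version `ē` of a directed edge. -/
def undir (e : G.DEdge) : Sym2 G.V := s(e.val.1, e.val.2)

/-- The turning angle `∠(e,g) = Arg((h_g - t_g)/(h_e - t_e)) ∈ (-π, π]`. -/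
noncomputable def tangle (e g : G.DEdge) : ℝ :=
  Complex.arg ((G.pos g.val.2 - G.pos g.val.1) / (G.pos e.val.2 - G.pos e.val.1))

/-- The Kac–Ward transition matrix `Λ`, indexed by directed edges. -/
noncomputable def transMatrix (x : Sym2 G.V → ℝ) : Matrix G.DEdge G.DEdge ℂ :=
  fun e g =>
    if e.val.2 = g.val.1 ∧ g ≠ G.rev e then
      (x (G.undir e) : ℂ) * Complex.exp (Complex.I / 2 * (G.tangle e g : ℂ))
    else 0

/-- A non-backtracking walk of length `n ≥ 1`, encoded as the list
`(w₁, …, w_{n+1})` of its `n+1` directed edges: consecutive edges are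
incident head-to-tail and the walk never immediately reverses an edge. -/
def IsWalk (l : List G.DEdge) : Prop :=
  2 ≤ l.length ∧ l.Chain' (fun e g => e.val.2 = g.val.1 ∧ g ≠ G.rev e)

/-- The length `|w|` (number of steps) of a walk given as a list of edges. -/
def len (l : List G.DEdge) : ℕ := l.length - 1

/-- The weight `λ(w) = ∏_{i=1}^{n} Λ_{w_i, w_{i+1}}` of a walk. -/
noncomputable def wlam (x : Sym2 G.V → ℝ) (l : List G.DEdge) : ℂ :=
  (List.zipWith (fun e g => G.transMatrix x e g) l l.tail).prod

/-- The edge weight `x(w) = ∏_{i=1}^{n} x_{\bar{w_i}}` of a walk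
(the weight of the last edge is not included). -/
def wx (x : Sym2 G.V → ℝ) (l : List G.DEdge) : ℝ :=
  (l.dropLast.map (fun e => x (G.undir e))).prod

/-- The total turning angle `α(w) = Σ_{i=1}^{n} ∠(w_i, w_{i+1})` of a walk. -/
noncomputable def walpha (l : List G.DEdge) : ℝ :=
  (List.zipWith (fun e g => G.tangle e g) l l.tail).sum

/-- The reversal `w⁻¹ = (-w_{n+1}, …, -w₁)` of a walk. -/
def wrev (l : List G.DEdge) : List G.DEdge := (l.map G.rev).reverse

/-- The concatenation `w ⊕ w'` of two walks, the first ending with the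
directed edge with which the second starts. -/
def wconcat (l l' : List G.DEdge) : List G.DEdge := l ++ l'.tail

/-- A (rooted) loop: a walk of length at least `2` which starts and ends
with the same directed edge. -/
def IsLoop (l : List G.DEdge) : Prop :=
  G.IsWalk l ∧ 3 ≤ l.length ∧ l.head? = l.getLast?

/-- The number of times a loop `ℓ = (ℓ₁, …, ℓ_{n+1})` visits a directed
edge `e`, i.e. the number of occurrences of `e` among `ℓ₁, …, ℓ_n`. -/
def visits (l : List G.DEdge) (e : G.DEdge) : ℕ := l.dropLast.count e

/-- A loop `ℓ` of length `n` is self-avoiding if each vertex appearing in it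
appears in exactly two of the directed edges `ℓ₁, …, ℓ_n`. -/
def SelfAvoiding (l : List G.DEdge) : Prop :=
  G.IsLoop l ∧ ∀ v : G.V,
    l.dropLast.countP (fun e => decide (v = e.val.1 ∨ v = e.val.2)) ≠ 0 →
    l.dropLast.countP (fun e => decide (v = e.val.1 ∨ v = e.val.2)) = 2

/-- The degree of a vertex: the number of edges containing it. -/
def degV (v : G.V) : ℕ := (G.E.filter (fun e => v ∈ e)).card

/-- A finite set of edges is even if every vertex belongs to an even number
of its edges. -/
def IsEvenSet (H : Finset (Sym2 G.V)) : Prop :=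
  ∀ v : G.V, Even ((H.filter (fun e => v ∈ e)).card)

instance : DecidablePred G.IsEvenSet := fun H =>
  decidable_of_iff (∀ v : G.V, Even ((H.filter (fun e => v ∈ e)).card)) Iff.rfl

/-- The generating function `Z = Σ_{H even} ∏_{ē ∈ H} x_ē` of even
subgraphs. -/
def Z (x : Sym2 G.V → ℝ) : ℝ :=
  ∑ H ∈ G.E.powerset.filter G.IsEvenSet, ∏ e ∈ H, x e

end PlaneGraph

/-!
Write `λ(ℓ) = x(ℓ) · exp(iα(ℓ)/2)`, where `α(ℓ)` is the total turning angle. Since each turning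
angle is the argument of the ratio of consecutive directions, `exp(iα(w))` telescopes to the ratio
of the unit directions of the last and first edges of `w`; for a loop these coincide, so
`exp(iα(ℓ)/2) = ±1`. Reversing a walk negates every turning angle, because `Arg(1/z) = -Arg z`
unless `Arg z = π`, and planarity rules out a walk turning back along a straight line: the head of
one edge would then lie on the other edge. Hence `α(ℓ⁻¹) = -α(ℓ)`, while `x(ℓ⁻¹) = x(ℓ)`.
-/

namespace List

theorem tail_perm_dropLast_of_head_eq_getLast {α : Type*} {l : List α} (hne : l ≠ [])
    (h : l.head hne = l.getLast hne) : l.tail.Perm l.dropLast := by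
  have hrot : l.head hne :: l.tail = l.dropLast ++ [l.head hne] := by
    rw [List.cons_head_tail, h, List.dropLast_append_getLast]
  have hperm := List.perm_append_singleton (l.head hne) l.dropLast
  rw [← hrot] at hperm
  exact hperm.cons_inv

end List

namespace PlaneGraph

variable (G : PlaneGraph)

def Step (e g : G.DEdge) : Prop := e.val.2 = g.val.1 ∧ g ≠ G.rev e

def dvec (e : G.DEdge) : ℂ := G.pos e.val.2 - G.pos e.val.1

noncomputable def dir (e : G.DEdge) : ℂ := G.dvec e / ‖G.dvec e‖

variable {G}

theorem fst_ne_snd (e : G.DEdge) : e.val.1 ≠ e.val.2 := fun h =>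
  G.not_diag _ e.property (Sym2.mk_isDiag_iff.mpr h)

theorem dvec_ne_zero (e : G.DEdge) : G.dvec e ≠ 0 :=
  sub_ne_zero.mpr fun h => G.fst_ne_snd e (G.pos_inj h).symm

theorem dir_ne_zero (e : G.DEdge) : G.dir e ≠ 0 :=
  div_ne_zero (G.dvec_ne_zero e) <|
    Complex.ofReal_ne_zero.mpr (norm_ne_zero_iff.mpr (G.dvec_ne_zero e))

theorem dvec_rev (e : G.DEdge) : G.dvec (G.rev e) = -G.dvec e := (neg_sub _ _).symm

theorem undir_rev (e : G.DEdge) : G.undir (G.rev e) = G.undir e := Sym2.eq_swap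

theorem exp_tangle_mul_I (e g : G.DEdge) :
    Complex.exp (G.tangle e g * Complex.I) = G.dir g / G.dir e := by
  have hw := Complex.norm_mul_exp_arg_mul_I (G.dvec g / G.dvec e)
  have hne : (‖G.dvec e‖ : ℂ) ≠ 0 :=
    Complex.ofReal_ne_zero.mpr (norm_ne_zero_iff.mpr (G.dvec_ne_zero e))
  have hng : (‖G.dvec g‖ : ℂ) ≠ 0 :=
    Complex.ofReal_ne_zero.mpr (norm_ne_zero_iff.mpr (G.dvec_ne_zero g))
  rw [norm_div, Complex.ofReal_div] at hw
  change Complex.exp (Complex.arg (G.dvec g / G.dvec e) * Complex.I) = _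
  rw [dir, dir, eq_div_of_mul_eq (div_ne_zero hng hne) ((mul_comm _ _).trans hw)]
  field_simp

theorem not_sameRay_of_step {e g : G.DEdge} (h : G.Step e g) :
    ¬ SameRay ℝ (G.dvec g) (-G.dvec e) := by
  obtain ⟨⟨a, b⟩, he⟩ := e
  obtain ⟨⟨b', c⟩, hg⟩ := g
  obtain ⟨rfl : b = b', hback⟩ := h
  intro hray
  have hray' : SameRay ℝ (G.pos c -ᵥ G.pos b) (G.pos a -ᵥ G.pos b) := by
    simpa [dvec] using hray
  rcases wbtw_total_of_sameRay_vsub_left hray' with hc | ha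
  · have hmem : G.pos c ∈ segOf G.pos s(a, b) := by
      change G.pos c ∈ segment ℝ (G.pos a) (G.pos b)
      rw [segment_symm]
      exact mem_segment_iff_wbtw.mpr hc
    rcases Sym2.mem_iff.mp (G.vertex_on_edge _ he c hmem) with rfl | rfl
    · exact hback rfl
    · exact G.fst_ne_snd ⟨(c, c), hg⟩ rfl
  · have hmem : G.pos a ∈ segOf G.pos s(b, c) := mem_segment_iff_wbtw.mpr ha
    rcases Sym2.mem_iff.mp (G.vertex_on_edge _ hg a hmem) with rfl | rfl
    · exact G.fst_ne_snd ⟨(a, a), he⟩ rfl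
    · exact hback rfl

theorem arg_div_dvec_ne_pi {e g : G.DEdge} (h : G.Step e g) :
    Complex.arg (G.dvec g / G.dvec e) ≠ Real.pi := by
  intro hpi
  obtain ⟨hre, him⟩ := Complex.arg_eq_pi_iff.mp hpi
  refine G.not_sameRay_of_step h (Complex.sameRay_iff_arg_div_eq_zero.mpr ?_)
  rw [div_neg, Complex.arg_eq_zero_iff, Complex.neg_re, Complex.neg_im]
  exact ⟨by linarith, by rw [him, neg_zero]⟩

theorem tangle_rev_rev {e g : G.DEdge} (h : G.Step e g) :
    G.tangle (G.rev g) (G.rev e) = -G.tangle e g := by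
  change Complex.arg (G.dvec (G.rev e) / G.dvec (G.rev g)) = -Complex.arg (G.dvec g / G.dvec e)
  rw [dvec_rev, dvec_rev, neg_div_neg_eq, ← inv_div, Complex.arg_inv,
    if_neg (G.arg_div_dvec_ne_pi h)]

variable (x : Sym2 G.V → ℝ)

theorem transMatrix_of_step {e g : G.DEdge} (h : G.Step e g) :
    G.transMatrix x e g = x (G.undir e) * Complex.exp (Complex.I / 2 * G.tangle e g) :=
  if_pos h

@[simp]
theorem wlam_cons_cons (e g : G.DEdge) (t : List G.DEdge) :
    G.wlam x (e :: g :: t) = G.transMatrix x e g * G.wlam x (g :: t) := by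
  simp [wlam]

@[simp]
theorem wx_cons_cons (e g : G.DEdge) (t : List G.DEdge) :
    G.wx x (e :: g :: t) = x (G.undir e) * G.wx x (g :: t) := by
  simp [wx]

@[simp]
theorem walpha_cons_cons (e g : G.DEdge) (t : List G.DEdge) :
    G.walpha (e :: g :: t) = G.tangle e g + G.walpha (g :: t) := by
  simp [walpha]

theorem wlam_eq_wx_mul_exp_walpha :
    ∀ {l : List G.DEdge}, l.IsChain G.Step →
      G.wlam x l = G.wx x l * Complex.exp (Complex.I / 2 * G.walpha l)
  | [], _ | [_], _ => by simp [wlam, wx, walpha]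
  | e :: g :: t, h => by
    obtain ⟨hstep, htail⟩ := List.isChain_cons_cons.mp h
    rw [wlam_cons_cons, wx_cons_cons, walpha_cons_cons, wlam_eq_wx_mul_exp_walpha htail,
      transMatrix_of_step x hstep]
    push_cast
    rw [mul_add, Complex.exp_add]
    ring

theorem exp_walpha_mul_I :
    ∀ {l : List G.DEdge} (hne : l ≠ []),
      Complex.exp (G.walpha l * Complex.I) = G.dir (l.getLast hne) / G.dir (l.head hne)
  | [e], _ => by simp [walpha, G.dir_ne_zero e]
  | e :: g :: t, _ => by
    rw [walpha_cons_cons, Complex.ofReal_add, add_mul, Complex.exp_add, exp_tangle_mul_I,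
      exp_walpha_mul_I (List.cons_ne_nil g t), List.getLast_cons_cons, List.head_cons,
      List.head_cons]
    field_simp [G.dir_ne_zero g]

theorem isChain_step_wrev {l : List G.DEdge} (h : l.IsChain G.Step) :
    (G.wrev l).IsChain G.Step := by
  rw [wrev, List.isChain_reverse, List.isChain_map]
  exact h.imp fun e g ⟨hhead, hback⟩ => ⟨hhead.symm, fun hrev => hback hrev.symm⟩

theorem walpha_append_singleton :
    ∀ {l : List G.DEdge} (hne : l ≠ []) (a : G.DEdge),
      G.walpha (l ++ [a]) = G.walpha l + G.tangle (l.getLast hne) a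
  | [_], _, _ => by simp [walpha]
  | e :: g :: t, _, a => by
    rw [List.cons_append, List.cons_append, walpha_cons_cons, ← List.cons_append,
      walpha_append_singleton (List.cons_ne_nil g t), walpha_cons_cons, List.getLast_cons_cons]
    ring

theorem walpha_wrev :
    ∀ {l : List G.DEdge}, l.IsChain G.Step → G.walpha (G.wrev l) = -G.walpha l
  | [], _ | [_], _ => by simp [wrev, walpha]
  | e :: g :: t, h => by
    obtain ⟨hstep, htail⟩ := List.isChain_cons_cons.mp h
    have hsplit : G.wrev (e :: g :: t) = G.wrev (g :: t) ++ [G.rev e] := by simp [wrev]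
    have hne : G.wrev (g :: t) ≠ [] := by simp [wrev]
    have hlast : (G.wrev (g :: t)).getLast hne = G.rev g := List.getLast_reverse hne
    rw [hsplit, walpha_append_singleton hne, hlast, walpha_wrev htail, tangle_rev_rev hstep,
      walpha_cons_cons]
    ring

theorem wx_wrev_of_head_eq_getLast {l : List G.DEdge} (hne : l ≠ [])
    (h : l.head hne = l.getLast hne) : G.wx x (G.wrev l) = G.wx x l := by
  rw [wx, wx, wrev, List.dropLast_reverse, List.map_reverse, List.prod_reverse, ← List.map_tail,
    List.map_map]
  have hweight : (fun e => x (G.undir e)) ∘ G.rev = fun e => x (G.undir e) :=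
    funext fun e => congrArg x (G.undir_rev e)
  rw [hweight]
  exact ((List.tail_perm_dropLast_of_head_eq_getLast hne h).map _).prod_eq

theorem IsLoop.ne_nil {l : List G.DEdge} (hl : G.IsLoop l) : l ≠ [] := by
  rintro rfl
  simp [IsLoop] at hl

theorem IsLoop.head_eq_getLast {l : List G.DEdge} (hl : G.IsLoop l) :
    l.head hl.ne_nil = l.getLast hl.ne_nil :=
  Option.some_injective _ <| by
    rw [← List.head?_eq_some_head, ← List.getLast?_eq_getLast_of_ne_nil]
    exact hl.2.2

theorem IsLoop.exp_half_walpha {l : List G.DEdge} (hl : G.IsLoop l) :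
    Complex.exp (Complex.I / 2 * G.walpha l) = 1 ∨
      Complex.exp (Complex.I / 2 * G.walpha l) = -1 := by
  have hfull : Complex.exp (G.walpha l * Complex.I) = 1 := by
    rw [exp_walpha_mul_I hl.ne_nil, hl.head_eq_getLast, div_self (G.dir_ne_zero _)]
  rw [← sq_eq_one_iff, ← Complex.exp_nat_mul, ← hfull]
  ring_nf

end PlaneGraph

/-- For any loop `ℓ`, `λ(ℓ) = λ(ℓ⁻¹)` and `λ(ℓ) = ± x(ℓ)`. -/
theorem wlam_loop (G : PlaneGraph) (x : Sym2 G.V → ℝ) (l : List G.DEdge)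
    (hl : G.IsLoop l) :
    G.wlam x l = G.wlam x (G.wrev l) ∧
      (G.wlam x l = ((G.wx x l : ℝ) : ℂ) ∨ G.wlam x l = -((G.wx x l : ℝ) : ℂ)) := by
  have hchain : l.IsChain G.Step := hl.1.2
  rw [G.wlam_eq_wx_mul_exp_walpha x hchain,
    G.wlam_eq_wx_mul_exp_walpha x (G.isChain_step_wrev hchain), G.walpha_wrev hchain,
    G.wx_wrev_of_head_eq_getLast x hl.ne_nil hl.head_eq_getLast, Complex.ofReal_neg, mul_neg,
    Complex.exp_neg]
  rcases hl.exp_half_walpha with hsign | hsign <;> simp [hsign]
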